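/- Suppose τ is a negative p-simplex paired with σ = low_R(τ), and D_p = R_p U_p is obtained by lazy reduction. Let τ_k be a p-simplex later in the filtration with low_{R_p}(τ_k) < σ (strictly earlier). If U_p[τ, τ_k] = 0, then after transposing τ_k to the position immediately before τ (past any intermediate p-simplices τ_i with U_p[τ, τ_i] ≠ 0, assuming all intermediate p-simplices satisfy low_{R_p}(τ_i) ≤ σ), the simplex τ_k is still not paired with σ; if U_p[τ, τ_k] ≠ 0, then after the transposition τ_k becomes paired with σ. -/

import Mathlib

open Matrix

variable {F : Type*} [Field F] [DecidableEq F] {m n : ℕ}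

/-- 1-based row index of the lowest nonzero entry of column `j`;
`0` (the dummy minimal value) if the column is zero. -/
def lowNat (R : Matrix (Fin m) (Fin n) F) (j : Fin n) : ℕ :=
  (Finset.univ.filter fun i : Fin m => R i j ≠ 0).sup fun i => i.val + 1

/-- Subtract `α` times column `i` from column `j`. -/
def addColMul {k : ℕ} (M : Matrix (Fin k) (Fin n) F) (α : F) (i j : Fin n) :
    Matrix (Fin k) (Fin n) F :=
  fun a b => if b = j then M a b - α * M a i else M a b

/-- Add `α` times row `j` to row `i`. -/
def addRowMul (M : Matrix (Fin n) (Fin n) F) (α : F) (i j : Fin n) :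
    Matrix (Fin n) (Fin n) F :=
  fun a b => if a = i then M a b + α * M j b else M a b

/-- The state `(R, V, U)` maintained by the lazy reduction. -/
structure RedState (F : Type*) (m n : ℕ) where
  R : Matrix (Fin m) (Fin n) F
  V : Matrix (Fin n) (Fin n) F
  U : Matrix (Fin n) (Fin n) F

/-- Inner while-loop of the lazy reduction for column `j`: while the column is
nonzero and some earlier column has the same low, subtract
`α = R[low, j] / R[low, i]` times column `i` from column `j` (in `R` and `V`)
and record the inverse row operation in `U`.  Each iteration strictly decreases
the low of column `j`, so fuel `m + 1` always suffices. -/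
noncomputable def reduceColAux : ℕ → RedState F m n → Fin n → RedState F m n
  | 0, s, _ => s
  | fuel + 1, s, j =>
    if h : lowNat s.R j ≠ 0 ∧ ∃ i : Fin n, i < j ∧ lowNat s.R i = lowNat s.R j then
      let i := h.2.choose
      let r : Fin m := ⟨lowNat s.R j - 1, by
        have hle : lowNat s.R j ≤ m := Finset.sup_le fun a _ => a.isLt
        have := h.1
        omega⟩
      let α := s.R r j / s.R r i
      reduceColAux fuel ⟨addColMul s.R α i j, addColMul s.V α i j, addRowMul s.U α i j⟩ j
    else s

/-- The lazy reduction algorithm: starting from `R = D`, `V = U = 1`, process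
the columns in increasing order. -/
noncomputable def lazyReduce (D : Matrix (Fin m) (Fin n) F) : RedState F m n :=
  (List.finRange n).foldl (fun s j => reduceColAux (m + 1) s j) ⟨D, 1, 1⟩

def ReducedMat (R : Matrix (Fin m) (Fin n) F) : Prop :=
  ∀ j₁ j₂ : Fin n, lowNat R j₁ = lowNat R j₂ → lowNat R j₁ ≠ 0 → j₁ = j₂

def UpperTriFin (V : Matrix (Fin n) (Fin n) F) : Prop :=
  ∀ i j : Fin n, j < i → V i j = 0

/-- `R = D * V` is a reduced decomposition of `D`. -/
def ReducedDecomp (D R : Matrix (Fin m) (Fin n) F)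
    (V : Matrix (Fin n) (Fin n) F) : Prop :=
  ReducedMat R ∧ UpperTriFin V ∧ IsUnit V ∧ R = D * V

/-- The column permutation moving column `τk` to the position immediately
before `τ` (assuming `τ < τk`): new position `c` holds old column `movePerm τ τk c`. -/
def movePerm (τ τk : Fin n) : Fin n → Fin n := fun c =>
  if c.val < τ.val then c
  else if c.val = τ.val then τk
  else if c.val ≤ τk.val then ⟨c.val - 1, lt_of_le_of_lt (Nat.sub_le _ _) c.isLt⟩
  else c

/-! For a reduced decomposition `R' = A V'`, the low of column `τ` of `R'` is the least low of
`A u` over the vectors `u` supported on `[0, τ]` with `u τ ≠ 0`. The lazy reduction gives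
`D = R U` with `R` reduced and `U` an invertible upper-triangular product of transvections.
After moving `τk` in front of `τ`, the permuted matrix sends such a `u` to `R y`, where `y`
agrees with `u τ • U.col τk` on the rows `≥ τ`. As `R` is reduced, the low of `R y` is the
largest low of a column of `R` in the support of `y`, and `τ` is the only column of low
`σ = low_R(τ)`. Hence `σ` is attained only if `U τ τk ≠ 0`; in that case an upper-triangular
solve clears the rows `< τ` of `y`, which leaves a combination of the columns in `[τ, τk]`, all
of low at most `σ`. -/

open Finset

section Low

def lowVec (v : Fin m → F) : ℕ :=
  (univ.filter fun i : Fin m => v i ≠ 0).sup fun i => i.val + 1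

theorem lowNat_eq_lowVec_col (R : Matrix (Fin m) (Fin n) F) (j : Fin n) :
    lowNat R j = lowVec (R.col j) := rfl

theorem le_lowVec {v : Fin m → F} {a : Fin m} (h : v a ≠ 0) : a.val + 1 ≤ lowVec v :=
  le_sup (f := fun i : Fin m => i.val + 1) (by simpa using h)

theorem lowVec_le_iff {v : Fin m → F} {l : ℕ} :
    lowVec v ≤ l ↔ ∀ a, v a ≠ 0 → a.val + 1 ≤ l := by
  simp [lowVec]

theorem exists_add_one_eq_lowVec {v : Fin m → F} (h : lowVec v ≠ 0) :
    ∃ a, v a ≠ 0 ∧ a.val + 1 = lowVec v := by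
  have hne : (univ.filter fun i : Fin m => v i ≠ 0).Nonempty :=
    nonempty_iff_ne_empty.2 fun he => h (by simp [lowVec, he])
  obtain ⟨a, ha, hsup⟩ := exists_mem_eq_sup _ hne fun i : Fin m => i.val + 1
  exact ⟨a, by simpa using ha, hsup.symm⟩

theorem le_lowNat {R : Matrix (Fin m) (Fin n) F} {a : Fin m} {j : Fin n} (h : R a j ≠ 0) :
    a.val + 1 ≤ lowNat R j :=
  le_lowVec (v := R.col j) h

theorem lowNat_le (R : Matrix (Fin m) (Fin n) F) (j : Fin n) : lowNat R j ≤ m :=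
  lowVec_le_iff.2 fun a _ => a.isLt

theorem lowVec_mulVec_le (R : Matrix (Fin m) (Fin n) F) (y : Fin n → F) :
    lowVec (R *ᵥ y) ≤ (univ.filter fun k => y k ≠ 0).sup (lowNat R) := by
  refine lowVec_le_iff.2 fun a ha => ?_
  obtain ⟨k, -, hk⟩ := exists_ne_zero_of_sum_ne_zero (s := univ) (f := fun k => R a k * y k) ha
  calc a.val + 1 ≤ lowNat R k := le_lowNat (left_ne_zero_of_mul hk)
    _ ≤ _ := le_sup (by simpa using right_ne_zero_of_mul hk)

/-- In a reduced matrix no cancellation can occur among the lowest entries of the columns. -/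
theorem ReducedMat.sup_le_lowVec_mulVec {R : Matrix (Fin m) (Fin n) F} (hR : ReducedMat R)
    (y : Fin n → F) :
    (univ.filter fun k => y k ≠ 0).sup (lowNat R) ≤ lowVec (R *ᵥ y) := by
  set s := (univ.filter fun k => y k ≠ 0).sup (lowNat R)
  rcases Nat.eq_zero_or_pos s with hs | hs
  · simp [hs]
  have hne : (univ.filter fun k => y k ≠ 0).Nonempty :=
    nonempty_iff_ne_empty.2 fun he => by simp [s, he] at hs
  obtain ⟨k₀, hk₀, hsk₀⟩ := exists_mem_eq_sup _ hne (lowNat R)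
  obtain ⟨r, hr, hrs⟩ := exists_add_one_eq_lowVec (v := R.col k₀) (by
    rw [← lowNat_eq_lowVec_col, ← hsk₀]; exact hs.ne')
  rw [← lowNat_eq_lowVec_col, ← hsk₀] at hrs
  have hentry : (R *ᵥ y) r = R r k₀ * y k₀ := by
    refine sum_eq_single k₀ (fun c _ hc => ?_) (absurd (mem_univ _))
    by_cases hyc : y c = 0
    · rw [hyc, mul_zero]
    have hcs : lowNat R c ≤ s := le_sup (by simpa using hyc)
    by_contra hRc
    have hrc : r.val + 1 ≤ lowNat R c := le_lowNat (left_ne_zero_of_mul hRc)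
    exact hc (hR c k₀ (by omega) (by omega))
  have := le_lowVec (v := R *ᵥ y) (a := r) (by
    rw [hentry]; exact mul_ne_zero hr (by simpa using hk₀))
  omega

theorem ReducedMat.lowVec_mulVec {R : Matrix (Fin m) (Fin n) F} (hR : ReducedMat R)
    (y : Fin n → F) :
    lowVec (R *ᵥ y) = (univ.filter fun k => y k ≠ 0).sup (lowNat R) :=
  (lowVec_mulVec_le R y).antisymm (hR.sup_le_lowVec_mulVec y)

theorem ReducedMat.lowNat_le_lowVec_mulVec {R : Matrix (Fin m) (Fin n) F} (hR : ReducedMat R)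
    {y : Fin n → F} {k : Fin n} (hy : y k ≠ 0) : lowNat R k ≤ lowVec (R *ᵥ y) :=
  hR.lowVec_mulVec y ▸ le_sup (by simpa using hy)

theorem ReducedMat.exists_lowNat_eq_lowVec_mulVec {R : Matrix (Fin m) (Fin n) F}
    (hR : ReducedMat R) {y : Fin n → F} (h : lowVec (R *ᵥ y) ≠ 0) :
    ∃ k, y k ≠ 0 ∧ lowNat R k = lowVec (R *ᵥ y) := by
  rw [hR.lowVec_mulVec] at h ⊢
  have hne : (univ.filter fun k => y k ≠ 0).Nonempty :=
    nonempty_iff_ne_empty.2 fun he => h (by simp [he])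
  obtain ⟨k, hk, hsup⟩ := exists_mem_eq_sup _ hne (lowNat R)
  exact ⟨k, by simpa using hk, hsup.symm⟩

end Low

theorem upperTriFin_iff_isUpperTriangular {K : Type*} [Field K] {V : Matrix (Fin n) (Fin n) K} :
    UpperTriFin V ↔ V.IsUpperTriangular :=
  ⟨fun h _ _ hij => h _ _ hij, fun h _ _ hij => h hij⟩

section UpperTriangular

variable {ι K : Type*} [Fintype ι] [LinearOrder ι] {V : Matrix ι ι K}

namespace Matrix.IsUpperTriangular

theorem inv [CommRing K] [DecidableEq ι] (h : V.IsUpperTriangular) : V⁻¹.IsUpperTriangular := by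
  by_cases hV : IsUnit V.det
  · have := invertibleOfIsUnitDet V hV
    exact blockTriangular_inv_of_blockTriangular h
  · rw [nonsing_inv_apply_not_isUnit V hV]
    exact blockTriangular_zero

theorem mulVec_apply_eq_zero [NonUnitalNonAssocSemiring K] (h : V.IsUpperTriangular)
    {u : ι → K} {k : ι} (hu : ∀ c, k ≤ c → u c = 0) : (V *ᵥ u) k = 0 :=
  show ∑ c, V k c * u c = 0 from sum_eq_zero fun c _ => by
    rcases lt_or_ge c k with hc | hc
    · rw [h hc, zero_mul]
    · rw [hu c hc, mul_zero]

theorem mulVec_apply_eq_mul [NonUnitalNonAssocSemiring K] (h : V.IsUpperTriangular)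
    {u : ι → K} {k : ι} (hu : ∀ c, k < c → u c = 0) : (V *ᵥ u) k = V k k * u k :=
  show ∑ c, V k c * u c = _ from sum_eq_single k (fun c _ hc => by
    rcases hc.lt_or_gt with hc | hc
    · rw [h hc, zero_mul]
    · rw [hu c hc, mul_zero]) (absurd (mem_univ k))

theorem apply_self_ne_zero [Field K] (h : V.IsUpperTriangular) (hV : IsUnit V) (i : ι) :
    V i i ≠ 0 := by
  rw [isUnit_iff_isUnit_det, det_of_isUpperTriangular h, isUnit_iff_ne_zero,
    prod_ne_zero_iff] at hV
  exact hV i (mem_univ i)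

theorem exists_mulVec_eq [CommRing K] [DecidableEq ι] (h : V.IsUpperTriangular) (hV : IsUnit V)
    {g : ι → K} {τ : ι} (hg : ∀ k, τ ≤ k → g k = 0) :
    ∃ w, (∀ c, τ ≤ c → w c = 0) ∧ V *ᵥ w = g :=
  ⟨V⁻¹ *ᵥ g, fun _ hc => h.inv.mulVec_apply_eq_zero fun d hd => hg d (hc.trans hd), by
    rw [mulVec_mulVec, mul_nonsing_inv _ ((isUnit_iff_isUnit_det V).1 hV), one_mulVec]⟩

end Matrix.IsUpperTriangular

end UpperTriangular

theorem ReducedDecomp.isLeast_lowNat {A R : Matrix (Fin m) (Fin n) F}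
    {V : Matrix (Fin n) (Fin n) F} (h : ReducedDecomp A R V) (j : Fin n) :
    IsLeast {l | ∃ u : Fin n → F, (∀ c, j < c → u c = 0) ∧ u j ≠ 0 ∧ lowVec (A *ᵥ u) = l}
      (lowNat R j) := by
  obtain ⟨hR, hV, hVu, rfl⟩ := h
  rw [upperTriFin_iff_isUpperTriangular] at hV
  refine ⟨⟨V.col j, fun c hc => hV hc, hV.apply_self_ne_zero hVu j, ?_⟩, ?_⟩
  · rw [lowNat_eq_lowVec_col, ← mulVec_single_one, mulVec_mulVec, mulVec_single_one]
  · rintro _ ⟨u, hu, huj, rfl⟩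
    have hA : A *ᵥ u = (A * V) *ᵥ (V⁻¹ *ᵥ u) := by
      rw [mulVec_mulVec, Matrix.mul_assoc, mul_nonsing_inv _ ((isUnit_iff_isUnit_det V).1 hVu),
        Matrix.mul_one]
    rw [hA]
    refine hR.lowNat_le_lowVec_mulVec ?_
    rw [hV.inv.mulVec_apply_eq_mul hu]
    exact mul_ne_zero (hV.inv.apply_self_ne_zero (isUnit_nonsing_inv_iff.2 hVu) j) huj

section LazyReduction

section Transvection

variable {K : Type*} [Field K]

theorem addColMul_eq_mul_transvection {k : ℕ} (M : Matrix (Fin k) (Fin n) K)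
    (α : K) (i j : Fin n) : addColMul M α i j = M * transvection i j (-α) := by
  ext a b
  by_cases hb : b = j
  · subst hb
    simp [addColMul, sub_eq_add_neg, mul_comm]
  · simp [addColMul, hb]

theorem addRowMul_eq_transvection_mul (N : Matrix (Fin n) (Fin n) K)
    (α : K) (i j : Fin n) : addRowMul N α i j = transvection i j α * N := by
  ext a b
  by_cases ha : a = i
  · subst ha
    simp [addRowMul]
  · simp [addRowMul, ha]

def RedState.Invariant (D : Matrix (Fin m) (Fin n) K)
    (s : RedState K m n) : Prop :=
  s.R * s.U = D ∧ s.U.IsUpperTriangular ∧ IsUnit s.U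

theorem RedState.Invariant.addColMul {D : Matrix (Fin m) (Fin n) K} {s : RedState K m n}
    (hs : s.Invariant D) (α : K) {i j : Fin n} (hij : i < j) :
    RedState.Invariant D
      ⟨addColMul s.R α i j, addColMul s.V α i j, addRowMul s.U α i j⟩ := by
  obtain ⟨hRU, hU, hUu⟩ := hs
  simp only [RedState.Invariant, addColMul_eq_mul_transvection, addRowMul_eq_transvection_mul]
  refine ⟨?_, (blockTriangular_transvection hij.le α).mul hU, ?_⟩
  · rw [Matrix.mul_assoc, ← Matrix.mul_assoc (transvection i j (-α)),
      transvection_mul_transvection_same _ _ hij.ne, neg_add_cancel, transvection_zero,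
      Matrix.one_mul, hRU]
  · exact ((isUnit_iff_isUnit_det _).2 (by simp [hij.ne])).mul hUu

end Transvection

/-- The guard of the inner loop of the lazy reduction. -/
def HasLowConflict (R : Matrix (Fin m) (Fin n) F) (j : Fin n) : Prop :=
  lowNat R j ≠ 0 ∧ ∃ i : Fin n, i < j ∧ lowNat R i = lowNat R j

theorem hasLowConflict_congr {R R' : Matrix (Fin m) (Fin n) F} {j : Fin n}
    (h : ∀ c ≤ j, R.col c = R'.col c) : HasLowConflict R j ↔ HasLowConflict R' j := by
  have hlow : ∀ c ≤ j, lowNat R c = lowNat R' c := fun c hc => by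
    rw [lowNat_eq_lowVec_col, lowNat_eq_lowVec_col, h c hc]
  unfold HasLowConflict
  rw [hlow j le_rfl]
  exact and_congr_right fun _ => exists_congr fun i => and_congr_right fun hij => by
    rw [hlow i hij.le]

theorem reducedMat_of_forall_not_hasLowConflict {R : Matrix (Fin m) (Fin n) F}
    (h : ∀ j, ¬ HasLowConflict R j) : ReducedMat R := by
  intro j₁ j₂ heq hne
  rcases lt_trichotomy j₁ j₂ with hlt | rfl | hgt
  · exact (h j₂ ⟨heq ▸ hne, j₁, hlt, heq⟩).elim
  · rfl
  · exact (h j₁ ⟨hne, j₂, hgt, heq.symm⟩).elim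

theorem lowNat_addColMul_lt {M : Matrix (Fin m) (Fin n) F} {i j : Fin n} (hj : lowNat M j ≠ 0)
    (hij : lowNat M i = lowNat M j) {r : Fin m} (hr : r.val + 1 = lowNat M j) :
    lowNat (addColMul M (M r j / M r i) i j) j < lowNat M j := by
  have hri : M r i ≠ 0 := by
    obtain ⟨a, ha, hai⟩ := exists_add_one_eq_lowVec (v := M.col i) (by
      rw [← lowNat_eq_lowVec_col, hij]; exact hj)
    obtain rfl : a = r := Fin.ext (by rw [← lowNat_eq_lowVec_col] at hai; omega)
    exact ha
  have hzero : ∀ a : Fin m, lowNat M j < a.val + 1 → M a i = 0 ∧ M a j = 0 := fun a ha =>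
    ⟨by_contra fun h => by have := le_lowNat h; omega,
      by_contra fun h => by have := le_lowNat h; omega⟩
  suffices lowNat (addColMul M (M r j / M r i) i j) j ≤ lowNat M j - 1 by omega
  refine lowVec_le_iff.2 fun a ha => ?_
  replace ha : M a j - M r j / M r i * M a i ≠ 0 := by simpa [addColMul] using ha
  by_contra hlt
  rcases (show a = r ∨ lowNat M j < a.val + 1 by omega) with rfl | hgt
  · exact ha (by rw [div_mul_cancel₀ _ hri, sub_self])
  · exact ha (by rw [(hzero a hgt).1, (hzero a hgt).2, mul_zero, sub_zero])

theorem reduceColAux_invariant {D : Matrix (Fin m) (Fin n) F} :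
    ∀ (fuel : ℕ) {s : RedState F m n} (j : Fin n), s.Invariant D →
      (reduceColAux fuel s j).Invariant D
  | 0, _, _, hs => hs
  | fuel + 1, s, j, hs => by
    rw [reduceColAux]
    split_ifs with h
    · exact reduceColAux_invariant fuel j (hs.addColMul _ h.2.choose_spec.1)
    · exact hs

theorem reduceColAux_col_of_ne :
    ∀ (fuel : ℕ) (s : RedState F m n) {j c : Fin n}, c ≠ j →
      (reduceColAux fuel s j).R.col c = s.R.col c
  | 0, _, _, _, _ => rfl
  | fuel + 1, s, j, c, hc => by
    rw [reduceColAux]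
    split_ifs
    · exact (reduceColAux_col_of_ne fuel _ hc).trans (funext fun _ => if_neg hc)
    · rfl

theorem not_hasLowConflict_reduceColAux :
    ∀ (fuel : ℕ) (s : RedState F m n) (j : Fin n), lowNat s.R j < fuel →
      ¬ HasLowConflict (reduceColAux fuel s j).R j
  | 0, _, _, h => absurd h (Nat.not_lt_zero _)
  | fuel + 1, s, j, hfuel => by
    rw [reduceColAux]
    split_ifs with h
    · refine not_hasLowConflict_reduceColAux fuel _ j ?_
      have hlt := lowNat_addColMul_lt h.1 h.2.choose_spec.2
        (r := ⟨lowNat s.R j - 1, by have := lowNat_le s.R j; omega⟩)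
        (Nat.sub_add_cancel (Nat.one_le_iff_ne_zero.2 h.1))
      exact hlt.trans_le (by omega)
    · exact h

theorem foldl_reduceColAux_invariant {D : Matrix (Fin m) (Fin n) F} (l : List (Fin n))
    {s : RedState F m n} (hs : s.Invariant D) :
    (l.foldl (fun s j => reduceColAux (m + 1) s j) s).Invariant D := by
  induction l generalizing s with
  | nil => exact hs
  | cons j l ih => exact ih (reduceColAux_invariant _ j hs)

theorem foldl_reduceColAux_col_of_not_mem {l : List (Fin n)} {c : Fin n} (hc : c ∉ l)
    (s : RedState F m n) :
    (l.foldl (fun s j => reduceColAux (m + 1) s j) s).R.col c = s.R.col c := by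
  induction l generalizing s with
  | nil => rfl
  | cons j l ih =>
    rw [List.mem_cons, not_or] at hc
    exact (ih hc.2 _).trans (reduceColAux_col_of_ne _ s hc.1)

theorem not_hasLowConflict_foldl_reduceColAux {l : List (Fin n)} (hl : l.Pairwise (· < ·))
    (s : RedState F m n) :
    ∀ j ∈ l, ¬ HasLowConflict (l.foldl (fun s j => reduceColAux (m + 1) s j) s).R j := by
  induction l generalizing s with
  | nil => simp
  | cons j l ih =>
    rw [List.pairwise_cons] at hl
    rintro j' (_ | ⟨_, hj'⟩)
    · rw [List.foldl_cons, hasLowConflict_congr fun c hc =>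
        foldl_reduceColAux_col_of_not_mem (fun hcl => (hl.1 c hcl).not_ge hc) _]
      exact not_hasLowConflict_reduceColAux _ s j (Nat.lt_succ_of_le (lowNat_le _ _))
    · exact ih hl.2 _ j' hj'

theorem lazyReduce_invariant (D : Matrix (Fin m) (Fin n) F) : (lazyReduce D).Invariant D :=
  foldl_reduceColAux_invariant _ ⟨Matrix.mul_one D, blockTriangular_one, isUnit_one⟩

theorem reducedMat_lazyReduce (D : Matrix (Fin m) (Fin n) F) : ReducedMat (lazyReduce D).R :=
  reducedMat_of_forall_not_hasLowConflict fun j =>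
    not_hasLowConflict_foldl_reduceColAux (List.pairwise_lt_finRange n) _ j (List.mem_finRange j)

end LazyReduction

section Transposition

variable {K : Type*} [CommRing K] {τ τk : Fin n}

theorem movePerm_of_lt {c : Fin n} (h : c < τ) : movePerm τ τk c = c := if_pos h

theorem movePerm_self : movePerm τ τk τ = τk := by simp [movePerm]

theorem submatrix_movePerm_mulVec {k : ℕ} (M : Matrix (Fin k) (Fin n) K) {u : Fin n → K}
    (hu : ∀ c, τ < c → u c = 0) :
    M.submatrix id (movePerm τ τk) *ᵥ u =
      M *ᵥ (fun c => if c < τ then u c else 0) + u τ • M.col τk := by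
  ext r
  have hterm : ∀ c, M r (movePerm τ τk c) * u c =
      M r c * (if c < τ then u c else 0) + if c = τ then u τ * M r τk else 0 := fun c => by
    rcases lt_trichotomy c τ with hc | rfl | hc
    · simp [movePerm_of_lt hc, hc, hc.ne]
    · simp [movePerm_self, mul_comm]
    · simp [hu c hc, hc.ne', hc.not_gt]
  simp only [Pi.add_apply, Pi.smul_apply, smul_eq_mul, col_apply, mulVec, dotProduct,
    submatrix_apply, id, hterm, sum_add_distrib, sum_ite_eq', mem_univ, if_true]

theorem Matrix.IsUpperTriangular.submatrix_movePerm_mulVec_apply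
    {U : Matrix (Fin n) (Fin n) K} (hU : U.IsUpperTriangular) {u : Fin n → K}
    (hu : ∀ c, τ < c → u c = 0) {k : Fin n} (hk : τ ≤ k) :
    (U.submatrix id (movePerm τ τk) *ᵥ u) k = u τ * U k τk := by
  rw [submatrix_movePerm_mulVec U hu, Pi.add_apply,
    hU.mulVec_apply_eq_zero fun c hc => if_neg (hk.trans hc).not_gt]
  simp

theorem Matrix.IsUpperTriangular.exists_submatrix_movePerm_mulVec_eq
    {U : Matrix (Fin n) (Fin n) K} (hU : U.IsUpperTriangular) (hUu : IsUnit U) (τ τk : Fin n) :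
    ∃ u, (∀ c, τ < c → u c = 0) ∧ u τ = 1 ∧
      U.submatrix id (movePerm τ τk) *ᵥ u = fun k => if k < τ then 0 else U k τk := by
  obtain ⟨w, hw, hUw⟩ := hU.exists_mulVec_eq hUu (g := fun k => if k < τ then U k τk else 0)
    (τ := τ) fun k hk => if_neg hk.not_gt
  have hu : ∀ c, τ < c → (Pi.single τ 1 - w : Fin n → K) c = 0 := fun c hc => by
    simp [hc.ne', hw c hc.le]
  have hwτ : w τ = 0 := hw τ le_rfl
  refine ⟨Pi.single τ 1 - w, hu, by simp [hwτ], ?_⟩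
  have htrunc : (fun c => if c < τ then (Pi.single τ 1 - w : Fin n → K) c else 0) = -w := by
    ext c
    by_cases hc : c < τ
    · simp [hc, hc.ne]
    · simp [hc, hw c (not_lt.1 hc)]
  rw [submatrix_movePerm_mulVec U hu, htrunc, mulVec_neg, hUw]
  ext k
  by_cases hk : k < τ <;> simp [hk, hwτ]

end Transposition

section KeyStep

variable {D R R' : Matrix (Fin m) (Fin n) F} {U V' : Matrix (Fin n) (Fin n) F} {τ τk : Fin n}

theorem lowNat_movePerm_ne_of_apply_eq_zero (hR : ReducedMat R) (hU : U.IsUpperTriangular)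
    (hRU : R * U = D) (hτ : lowNat R τ ≠ 0) (h0 : U τ τk = 0)
    (h : ReducedDecomp (D.submatrix id (movePerm τ τk)) R' V') : lowNat R' τ ≠ lowNat R τ := by
  subst hRU
  intro heq
  obtain ⟨u, hu, huτ, hlow⟩ := (h.isLeast_lowNat τ).1
  have hRy : lowVec (R *ᵥ (U.submatrix id (movePerm τ τk) *ᵥ u)) = lowNat R τ := by
    rw [mulVec_mulVec, ← heq, ← hlow]
    rfl
  obtain ⟨k, hyk, hk⟩ := hR.exists_lowNat_eq_lowVec_mulVec (hRy ▸ hτ)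
  obtain rfl : k = τ := hR k τ (hk.trans hRy) (hk.trans hRy ▸ hτ)
  exact hyk (by rw [hU.submatrix_movePerm_mulVec_apply hu le_rfl, h0, mul_zero])

theorem lowNat_movePerm_eq_of_apply_ne_zero (hR : ReducedMat R) (hU : U.IsUpperTriangular)
    (hUu : IsUnit U) (hRU : R * U = D) (hk : lowNat R τk ≤ lowNat R τ)
    (hmid : ∀ c, τ < c → c < τk → lowNat R c ≤ lowNat R τ) (h0 : U τ τk ≠ 0)
    (h : ReducedDecomp (D.submatrix id (movePerm τ τk)) R' V') : lowNat R' τ = lowNat R τ := by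
  subst hRU
  have hA : ∀ u, (R * U).submatrix id (movePerm τ τk) *ᵥ u =
      R *ᵥ (U.submatrix id (movePerm τ τk) *ᵥ u) := fun u => (mulVec_mulVec u R _).symm
  obtain ⟨⟨u, hu, huτ, hlow⟩, hleast⟩ := h.isLeast_lowNat τ
  refine le_antisymm ?_ ?_
  · obtain ⟨w, hw, hwτ, hUw⟩ := hU.exists_submatrix_movePerm_mulVec_eq hUu τ τk
    have hband : ∀ k, (if k < τ then 0 else U k τk) ≠ 0 → lowNat R k ≤ lowNat R τ := by
      intro k hk'
      have hτk : τ ≤ k := not_lt.1 fun hlt => hk' (if_pos hlt)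
      have hkτk : k ≤ τk := not_lt.1 fun hlt => hk' (by rw [if_neg hτk.not_gt, hU hlt])
      rcases hτk.eq_or_lt with rfl | hτk
      · exact le_rfl
      rcases hkτk.eq_or_lt with rfl | hkτk
      · exact hk
      · exact hmid k hτk hkτk
    calc lowNat R' τ ≤ lowVec ((R * U).submatrix id (movePerm τ τk) *ᵥ w) :=
          hleast ⟨w, hw, by simp [hwτ], rfl⟩
      _ ≤ (univ.filter fun k => (if k < τ then 0 else U k τk) ≠ 0).sup (lowNat R) := by
          rw [hA, hUw]; exact lowVec_mulVec_le _ _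
      _ ≤ lowNat R τ := Finset.sup_le fun k hk' => hband k (mem_filter.1 hk').2
  · rw [← hlow, hA]
    refine hR.lowNat_le_lowVec_mulVec ?_
    rw [hU.submatrix_movePerm_mulVec_apply hu le_rfl]
    exact mul_ne_zero huτ h0

end KeyStep

theorem increase_death_key_step_general (D : Matrix (Fin m) (Fin n) F) (τ τk : Fin n)
    (hτ : lowNat (lazyReduce D).R τ ≠ 0)
    (hk : lowNat (lazyReduce D).R τk < lowNat (lazyReduce D).R τ)
    (hmid : ∀ c : Fin n, τ < c → c < τk →
      lowNat (lazyReduce D).R c ≤ lowNat (lazyReduce D).R τ) :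
    ((lazyReduce D).U τ τk = 0 →
      ∀ R' V', ReducedDecomp (fun r c => D r (movePerm τ τk c)) R' V' →
        lowNat R' τ ≠ lowNat (lazyReduce D).R τ) ∧
    ((lazyReduce D).U τ τk ≠ 0 →
      ∀ R' V', ReducedDecomp (fun r c => D r (movePerm τ τk c)) R' V' →
        lowNat R' τ = lowNat (lazyReduce D).R τ) := by
  obtain ⟨hRU, hU, hUu⟩ := lazyReduce_invariant D
  have hR := reducedMat_lazyReduce D
  exact ⟨fun h0 _ _ h => lowNat_movePerm_ne_of_apply_eq_zero hR hU hRU hτ h0 h,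
    fun h0 _ _ h => lowNat_movePerm_eq_of_apply_ne_zero hR hU hUu hRU hk.le hmid h0 h⟩

/-- Key step of the Increase Death theorem.  Let `D = R U` come from the lazy
reduction, `τ` a negative simplex (column) paired with `σ = low_R(τ)`, and `τk`
a later column with `low_R(τk) < low_R(τ)`, all intermediate columns having low
at most `low_R(τ)`.  Transpose `τk` to the position immediately before `τ`.
If `U[τ, τk] = 0`, then in any reduced decomposition of the permuted matrix the
low of the column of `τk` (now at position `τ`) differs from `σ`, i.e. `τk` is
not paired with `σ`; if `U[τ, τk] ≠ 0`, then `τk` becomes paired with `σ`. -/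
theorem increase_death_key_step (D : Matrix (Fin m) (Fin n) F) (τ τk : Fin n)
    (hlt : τ < τk)
    (hτ : lowNat (lazyReduce D).R τ ≠ 0)
    (hk : lowNat (lazyReduce D).R τk < lowNat (lazyReduce D).R τ)
    (hmid : ∀ c : Fin n, τ < c → c < τk →
      lowNat (lazyReduce D).R c ≤ lowNat (lazyReduce D).R τ) :
    ((lazyReduce D).U τ τk = 0 →
      ∀ R' V', ReducedDecomp (fun r c => D r (movePerm τ τk c)) R' V' →
        lowNat R' τ ≠ lowNat (lazyReduce D).R τ) ∧
    ((lazyReduce D).U τ τk ≠ 0 →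
      ∀ R' V', ReducedDecomp (fun r c => D r (movePerm τ τk c)) R' V' →
        lowNat R' τ = lowNat (lazyReduce D).R τ) :=
  increase_death_key_step_general D τ τk hτ hk hmid
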